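/- arXiv:2308.11290 — 3 statements merged into one kernel-verified Lean document; each statement's English description precedes it below -/
import Mathlib

section
/- Let ρ be any 2×2 complex matrix. Then (1/3) · Σ_{P ∈ {X,Y,Z}} Σ_{s ∈ {0,1}} ⟨e(P,s)|ρ|e(P,s)⟩ · (3·|e(P,s)⟩⟨e(P,s)| − I₂) = ρ. (Unbiasedness of the single-qubit Pauli classical-shadow channel: averaging the inverted snapshots over the three Pauli measurement bases, weighted by the Born-rule outcome weights, exactly recovers the state.) -/
open Matrix BigOperators

noncomputable section

/-- The eigenvectors `e(P,s)` of the Pauli matrices, with the index `0 ↦ X`, `1 ↦ Y`, `2 ↦ Z`: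
`e(X,s) = (1/√2)(1,(−1)^s)`, `e(Y,s) = (1/√2)(1,(−1)^s·i)`, `e(Z,0) = (1,0)`, `e(Z,1) = (0,1)`. -/
def evec : Fin 3 → Fin 2 → Fin 2 → ℂ
  | 0, s => fun a => (1 / (Real.sqrt 2 : ℂ)) * (if a = 1 then (-1 : ℂ) ^ (s : ℕ) else 1)
  | 1, s => fun a => (1 / (Real.sqrt 2 : ℂ)) * (if a = 1 then (-1 : ℂ) ^ (s : ℕ) * Complex.I else 1)
  | 2, s => fun a => if a = s then 1 else 0

/-- The outer product `|v⟩⟨v|`, with entries `v a * conj (v b)`. -/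
def outer {n : Type*} (v : n → ℂ) : Matrix n n ℂ :=
  Matrix.of fun a b => v a * (starRingEnd ℂ) (v b)

set_option maxHeartbeats 1000000 in
/-- Unbiasedness of the single-qubit Pauli classical-shadow channel:
`(1/3) · Σ_{P ∈ {X,Y,Z}} Σ_{s ∈ {0,1}} ⟨e(P,s)|ρ|e(P,s)⟩ · (3·|e(P,s)⟩⟨e(P,s)| − I₂) = ρ`. -/
theorem single_qubit_pauli_shadow_unbiased (ρ : Matrix (Fin 2) (Fin 2) ℂ) :
    (1 / 3 : ℂ) • ∑ P : Fin 3, ∑ s : Fin 2,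
      (∑ a, ∑ b, (starRingEnd ℂ) (evec P s a) * ρ a b * evec P s b) •
        ((3 : ℂ) • outer (evec P s) - 1) = ρ := by
  have ht : (((Real.sqrt 2 : ℝ) : ℂ))⁻¹ ^ 2 = 1/2 := by
    rw [← Complex.ofReal_inv, ← Complex.ofReal_pow]
    norm_num [Real.sq_sqrt]
  have h4 : (((Real.sqrt 2 : ℝ) : ℂ))⁻¹ ^ 4 = (1/2)^2 := by rw [← ht]; ring
  ext i j
  fin_cases i <;> fin_cases j <;>
  · simp only [Fin.sum_univ_succ, Fin.isValue, evec, outer, Matrix.of_apply,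
      Matrix.one_apply, Matrix.smul_apply, Matrix.sub_apply, Matrix.sum_apply, smul_eq_mul,
      _root_.map_mul, map_div₀, _root_.map_one, map_pow, map_neg, Complex.conj_I,
      Fin.sum_univ_zero, add_zero, Complex.conj_ofReal]
    norm_num
    ring_nf
    simp only [h4, ht, Complex.I_sq, Complex.I_pow_four]
    try ring
end
end

section
/- Let N ≥ 1 and let ρ be any complex matrix indexed by (Fin N → Fin 2). Then (1/3^N) · Σ_{P : Fin N → {X,Y,Z}} Σ_{b : Fin N → {0,1}} w_ρ(P,b) · S(P,b) = ρ. (N-qubit unbiasedness of Pauli-based classical shadows: the Born-weighted average of the inverse snapshots over all basis choices and outcomes recovers the state exactly.) -/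
/-!
Both sides are linear in `ρ`, so it suffices to treat matrix units `E_{uv}`. For these, the Born
weight `⟨e|u⟩⟨v|e⟩` and the snapshot both factor over the qubits, so the sum over bases and
outcomes is a product of single-qubit sums. On one qubit, averaging the measure-and-prepare
channel over the three mutually unbiased Pauli eigenbases gives the depolarising channel
`σ ↦ (σ + tr σ · I) / 3`, whose inverse sends `|e⟩⟨e|` to `3|e⟩⟨e| - I`; hence
`∑_{p,s} ⟨e|u⟩⟨v|e⟩ (3|e⟩⟨e| - I) = 3 E_{uv}`. The product of these is `3^N E_{uv}`.
-/

open Matrix BigOperators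

noncomputable section

/-- The tensor product `⊗_j A_j` of 2×2 matrices, as a matrix indexed by `Fin N → Fin 2`. -/
def tensorProd {N : ℕ} (A : Fin N → Matrix (Fin 2) (Fin 2) ℂ) :
    Matrix (Fin N → Fin 2) (Fin N → Fin 2) ℂ :=
  Matrix.of fun x y => ∏ j, A j (x j) (y j)

/-- The product basis vector `e(P,b)` with entries `∏_j e(P_j,b_j)(x_j)`. -/
def pvec {N : ℕ} (P : Fin N → Fin 3) (b : Fin N → Fin 2) : (Fin N → Fin 2) → ℂ :=
  fun x => ∏ j, evec (P j) (b j) (x j)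

/-- The Born-rule outcome weight `w_ρ(P,b) = ⟨e(P,b)|ρ|e(P,b)⟩`. -/
def wgt {N : ℕ} (ρ : Matrix (Fin N → Fin 2) (Fin N → Fin 2) ℂ)
    (P : Fin N → Fin 3) (b : Fin N → Fin 2) : ℂ :=
  ∑ x, ∑ y, (starRingEnd ℂ) (pvec P b x) * ρ x y * pvec P b y

/-- The inverse snapshot `S(P,b) = ⊗_j (3·|e(P_j,b_j)⟩⟨e(P_j,b_j)| − I₂)`. -/
def snapshot {N : ℕ} (P : Fin N → Fin 3) (b : Fin N → Fin 2) :
    Matrix (Fin N → Fin 2) (Fin N → Fin 2) ℂ :=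
  tensorProd (fun j => (3 : ℂ) • outer (evec (P j) (b j)) - 1)

open Finset

lemma sum_evec_snapshot_apply (u v x y : Fin 2) :
    ∑ p : Fin 3, ∑ s : Fin 2, starRingEnd ℂ (evec p s u) * evec p s v *
      ((3 : ℂ) • outer (evec p s) - 1) x y = 3 * single u v 1 x y := by
  have inv_sqrt_two_sq : (Real.sqrt 2 : ℂ)⁻¹ ^ 2 = 1 / 2 := by
    rw [inv_pow, ← Complex.ofReal_pow, Real.sq_sqrt zero_le_two]; norm_num
  have inv_sqrt_two_pow_four : (Real.sqrt 2 : ℂ)⁻¹ ^ 4 = 1 / 4 := by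
    rw [show 4 = 2 * 2 from rfl, pow_mul, inv_sqrt_two_sq]; norm_num
  simp only [Fin.sum_univ_three, Fin.sum_univ_two, evec, outer, Matrix.sub_apply,
    Matrix.smul_apply, of_apply, single_apply, one_div, map_mul, map_inv₀, Complex.conj_ofReal]
  fin_cases u <;> fin_cases v <;> fin_cases x <;> fin_cases y <;>
    simp [Complex.conj_I] <;> ring_nf <;>
    simp [inv_sqrt_two_sq, inv_sqrt_two_pow_four, Complex.I_sq] <;> ring_nf

lemma sum_pvec_snapshot_apply {N : ℕ} (u v x y : Fin N → Fin 2) :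
    ∑ P : Fin N → Fin 3, ∑ b : Fin N → Fin 2,
      starRingEnd ℂ (pvec P b u) * pvec P b v * snapshot P b x y = 3 ^ N * single u v 1 x y := by
  calc _ = ∑ P : Fin N → Fin 3, ∑ b : Fin N → Fin 2, ∏ j,
          starRingEnd ℂ (evec (P j) (b j) (u j)) * evec (P j) (b j) (v j) *
            ((3 : ℂ) • outer (evec (P j) (b j)) - 1) (x j) (y j) := by
        simp only [pvec, snapshot, tensorProd, of_apply, map_prod, prod_mul_distrib]
    _ = ∏ j, ∑ p : Fin 3, ∑ s : Fin 2, starRingEnd ℂ (evec p s (u j)) * evec p s (v j) *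
          ((3 : ℂ) • outer (evec p s) - 1) (x j) (y j) := by
        simp only [Fintype.prod_sum]
    _ = ∏ j, 3 * single (u j) (v j) (1 : ℂ) (x j) (y j) := by
        simp only [sum_evec_snapshot_apply]
    _ = 3 ^ N * single u v 1 x y := by
        simp only [prod_mul_distrib, prod_const, card_univ, Fintype.card_fin, single_apply,
          Fintype.prod_boole, funext_iff, forall_and]

theorem pauli_shadow_unbiased_general {N : ℕ}
    (ρ : Matrix (Fin N → Fin 2) (Fin N → Fin 2) ℂ) :
    (1 / 3 ^ N : ℂ) • ∑ P : Fin N → Fin 3, ∑ b : Fin N → Fin 2,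
      wgt ρ P b • snapshot P b = ρ := by
  ext x y
  have wgt_eq (P b) :
      wgt ρ P b = ∑ u, ∑ v, ρ u v * (starRingEnd ℂ (pvec P b u) * pvec P b v) := by
    simp only [wgt]; congr! 2; ring
  calc _ = (1 / 3 ^ N : ℂ) * ∑ u, ∑ v, ρ u v *
          ∑ P : Fin N → Fin 3, ∑ b : Fin N → Fin 2,
            starRingEnd ℂ (pvec P b u) * pvec P b v * snapshot P b x y := by
        simp only [Matrix.smul_apply, Matrix.sum_apply, smul_eq_mul, wgt_eq, sum_mul]
        rw [sum_comm_cycle]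
        refine congrArg _ (sum_congr rfl fun u _ => ?_)
        rw [sum_comm_cycle]
        simp only [mul_sum, mul_assoc]
    _ = (1 / 3 ^ N : ℂ) * ∑ u, ∑ v, ρ u v * (3 ^ N * single u v 1 x y) := by
        simp only [sum_pvec_snapshot_apply]
    _ = ρ x y := by
        simp only [single_apply, ite_and, mul_ite, mul_one, mul_zero, sum_ite_irrel, sum_const_zero,
          Fintype.sum_ite_eq']
        field_simp

/-- N-qubit unbiasedness of Pauli-based classical shadows: the Born-weighted average of the
inverse snapshots over all basis choices and outcomes recovers the state exactly:
`(1/3^N) · Σ_P Σ_b w_ρ(P,b) · S(P,b) = ρ`. -/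
theorem pauli_shadow_unbiased {N : ℕ} (hN : 1 ≤ N)
    (ρ : Matrix (Fin N → Fin 2) (Fin N → Fin 2) ℂ) :
    (1 / 3 ^ N : ℂ) • ∑ P : Fin N → Fin 3, ∑ b : Fin N → Fin 2,
      wgt ρ P b • snapshot P b = ρ :=
  pauli_shadow_unbiased_general ρ
end
end

section
/- Let N ≥ 1, let K ⊆ Fin N with |K| = k, and let O be the Pauli string with O_j ∈ {X,Y,Z} for each j ∈ K and O_j = I₂ for j ∉ K (a k-local Pauli observable). Then for every complex matrix ρ indexed by (Fin N → Fin 2), (1/3^N) · Σ_{P : Fin N → {X,Y,Z}} Σ_{b : Fin N → {0,1}} w_ρ(P,b) · (Tr(S(P,b) · (⊗_j O_j)))² = 3^k · Tr(ρ). In particular, for a trace-one state ρ the second moment of the single-snapshot classical-shadow estimator of a k-local Pauli observable equals exactly 3^k (the squared shadow norm of a k-local Pauli observable under random Pauli measurements). -/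
open Matrix BigOperators

noncomputable section

/-- The Pauli matrices, indexed by `0 ↦ X`, `1 ↦ Y`, `2 ↦ Z`. -/
def pauli : Fin 3 → Matrix (Fin 2) (Fin 2) ℂ
  | 0 => !![0, 1; 1, 0]
  | 1 => !![0, -Complex.I; Complex.I, 0]
  | 2 => !![1, 0; 0, -1]

/-!
Everything factorises over qubits: the measurement basis vectors and the snapshot are tensor
products, so for fixed matrix indices `x, y` the sum over `(P, b)` of
`conj (e(P,b)(x)) · e(P,b)(y) · Tr(S(P,b) · ⊗_j O_j)²` is a product of single-qubit sums. On one
qubit `Tr((3|e(p,s)⟩⟨e(p,s)| − I₂) σ_q) = 3 (−1)^s δ_{pq}` and `Tr(3|e(p,s)⟩⟨e(p,s)| − I₂) = 1`,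
so by completeness of each eigenbasis the factor is `9 δ_{x_j y_j}` on `K` and `3 δ_{x_j y_j}`
off `K`. The kernel is therefore `3^N 3^k δ_{xy}`, and pairing it with `ρ` gives `3^N 3^k Tr ρ`.
-/

lemma ofReal_sqrt_two_sq : ((Real.sqrt 2 : ℝ) : ℂ) ^ 2 = 2 := by
  rw [← Complex.ofReal_pow, Real.sq_sqrt zero_le_two, Complex.ofReal_ofNat]

lemma sum_conj_evec_mul_evec (p : Fin 3) (a b : Fin 2) :
    ∑ s, (starRingEnd ℂ) (evec p s a) * evec p s b = if a = b then 1 else 0 := by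
  fin_cases p <;> fin_cases a <;> fin_cases b <;>
    simp [evec, Fin.sum_univ_two, Complex.conj_ofReal] <;>
    field_simp <;> simp only [ofReal_sqrt_two_sq, Complex.I_sq] <;> ring

lemma trace_outer_evec (p : Fin 3) (s : Fin 2) : (outer (evec p s)).trace = 1 := by
  fin_cases p <;> fin_cases s <;>
    simp [outer, evec, trace_fin_two, Complex.conj_ofReal] <;>
    field_simp <;> simp only [ofReal_sqrt_two_sq, Complex.I_sq] <;> ring

lemma trace_outer_evec_mul_pauli (p q : Fin 3) (s : Fin 2) :
    (outer (evec p s) * pauli q).trace = if p = q then (-1) ^ (s : ℕ) else 0 := by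
  fin_cases p <;> fin_cases q <;> fin_cases s <;>
    simp [outer, evec, pauli, trace_fin_two, mul_apply, Fin.sum_univ_two, Complex.conj_ofReal] <;>
    field_simp <;> simp only [ofReal_sqrt_two_sq, Complex.I_sq] <;> ring

lemma trace_pauli (q : Fin 3) : (pauli q).trace = 0 := by
  fin_cases q <;> simp [pauli, trace_fin_two]

def qubitSnapshot (p : Fin 3) (s : Fin 2) : Matrix (Fin 2) (Fin 2) ℂ :=
  (3 : ℂ) • outer (evec p s) - 1

lemma snapshot_eq_tensorProd {N : ℕ} (P : Fin N → Fin 3) (b : Fin N → Fin 2) :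
    snapshot P b = tensorProd fun j => qubitSnapshot (P j) (b j) :=
  rfl

lemma trace_qubitSnapshot_mul_pauli (p q : Fin 3) (s : Fin 2) :
    (qubitSnapshot p s * pauli q).trace = if p = q then 3 * (-1) ^ (s : ℕ) else 0 := by
  rw [qubitSnapshot, sub_mul, smul_mul_assoc, one_mul, trace_sub, trace_smul,
    trace_outer_evec_mul_pauli, trace_pauli, smul_eq_mul, mul_ite, mul_zero, sub_zero]

lemma trace_qubitSnapshot (p : Fin 3) (s : Fin 2) : (qubitSnapshot p s).trace = 1 := by
  rw [qubitSnapshot, trace_sub, trace_smul, trace_outer_evec, trace_one]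
  norm_num

/-- The single-qubit factor of `∑_{P,b} conj (e(P,b)(x)) · e(P,b)(y) · Tr(S(P,b) · ⊗_j O_j)²`. -/
def qubitMoment (A : Matrix (Fin 2) (Fin 2) ℂ) (a b : Fin 2) : ℂ :=
  ∑ p, ∑ s, (starRingEnd ℂ) (evec p s a) * evec p s b *
    (qubitSnapshot p s * A).trace ^ 2

lemma qubitMoment_pauli (q : Fin 3) (a b : Fin 2) :
    qubitMoment (pauli q) a b = if a = b then 9 else 0 := by
  have hsq (p : Fin 3) (s : Fin 2) :
      (if p = q then 3 * (-1 : ℂ) ^ (s : ℕ) else 0) ^ 2 = if p = q then 9 else 0 := by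
    split_ifs <;> norm_num [mul_pow, ← pow_mul, pow_mul_comm]
  simp only [qubitMoment, trace_qubitSnapshot_mul_pauli, hsq, mul_ite, mul_zero,
    Finset.sum_ite_irrel, Finset.sum_const_zero, Finset.sum_ite_eq', Finset.mem_univ, if_true,
    ← Finset.sum_mul, sum_conj_evec_mul_evec, ite_mul, one_mul, zero_mul]

lemma qubitMoment_one (a b : Fin 2) : qubitMoment 1 a b = if a = b then 3 else 0 := by
  simp only [qubitMoment, mul_one, trace_qubitSnapshot, one_pow, sum_conj_evec_mul_evec,
    Finset.sum_ite_irrel, Finset.sum_const_zero, Finset.sum_const, Finset.card_univ,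
    Fintype.card_fin]
  split_ifs <;> norm_num

theorem Fintype.prod_sum_sum {ι α β R : Type*} [DecidableEq ι] [Fintype ι] [Fintype α]
    [Fintype β] [CommSemiring R] (f : ι → α → β → R) :
    ∏ i, ∑ a, ∑ b, f i a b = ∑ x : ι → α, ∑ y : ι → β, ∏ i, f i (x i) (y i) := by
  simp only [Fintype.prod_sum]

lemma trace_tensorProd_mul {N : ℕ} (A B : Fin N → Matrix (Fin 2) (Fin 2) ℂ) :
    (tensorProd A * tensorProd B).trace = ∏ j, (A j * B j).trace := by
  simp only [trace, diag, mul_apply, tensorProd, of_apply, ← Finset.prod_mul_distrib,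
    Fintype.prod_sum_sum]

lemma sum_conj_pvec_mul_pvec_mul_trace_sq {N : ℕ} (O : Fin N → Matrix (Fin 2) (Fin 2) ℂ)
    (x y : Fin N → Fin 2) :
    ∑ P, ∑ b, (starRingEnd ℂ) (pvec P b x) * pvec P b y * (snapshot P b * tensorProd O).trace ^ 2
      = ∏ j, qubitMoment (O j) (x j) (y j) := by
  simp only [qubitMoment, Fintype.prod_sum_sum, pvec, snapshot_eq_tensorProd, trace_tensorProd_mul,
    map_prod, ← Finset.prod_pow, ← Finset.prod_mul_distrib]

lemma sum_wgt_mul {N : ℕ} (ρ : Matrix (Fin N → Fin 2) (Fin N → Fin 2) ℂ)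
    (c : (Fin N → Fin 3) → (Fin N → Fin 2) → ℂ) :
    ∑ P, ∑ b, wgt ρ P b * c P b
      = ∑ x, ∑ y, ρ x y * ∑ P, ∑ b, (starRingEnd ℂ) (pvec P b x) * pvec P b y * c P b := by
  simp only [wgt, Finset.sum_mul, Finset.mul_sum]
  rw [Finset.sum_comm_cycle]
  refine Finset.sum_congr rfl fun x _ => ?_
  rw [Finset.sum_comm_cycle]
  simp only [mul_comm, mul_left_comm]

theorem shadow_second_moment_local_pauli_general {N : ℕ}
    (K : Finset (Fin N)) (k : ℕ) (hk : K.card = k)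
    (O : Fin N → Matrix (Fin 2) (Fin 2) ℂ)
    (hO : ∀ j ∈ K, O j = pauli 0 ∨ O j = pauli 1 ∨ O j = pauli 2)
    (hO' : ∀ j ∉ K, O j = 1)
    (ρ : Matrix (Fin N → Fin 2) (Fin N → Fin 2) ℂ) :
    (1 / 3 ^ N : ℂ) * ∑ P : Fin N → Fin 3, ∑ b : Fin N → Fin 2,
      wgt ρ P b * (Matrix.trace (snapshot P b * tensorProd O)) ^ 2
      = 3 ^ k * Matrix.trace ρ := by
  have hqubit (j : Fin N) (a b : Fin 2) :
      qubitMoment (O j) a b = if a = b then 3 * if j ∈ K then 3 else 1 else 0 := by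
    by_cases hj : j ∈ K
    · rcases hO j hj with h | h | h <;> simp only [h, hj, qubitMoment_pauli] <;> norm_num
    · simp only [hO' j hj, hj, qubitMoment_one]
      norm_num
  have hkernel (x y : Fin N → Fin 2) :
      ∏ j, qubitMoment (O j) (x j) (y j) = if x = y then 3 ^ N * 3 ^ k else 0 := by
    simp only [hqubit, Fintype.prod_ite_zero, ← funext_iff, Finset.prod_mul_distrib,
      Finset.prod_const, Finset.prod_ite_mem, Finset.univ_inter, hk, Finset.card_univ,
      Fintype.card_fin]
  rw [sum_wgt_mul]
  simp only [sum_conj_pvec_mul_pvec_mul_trace_sq, hkernel, mul_ite, mul_zero, Finset.sum_ite_eq,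
    Finset.mem_univ, if_true]
  rw [← Finset.sum_mul, show ∑ x, ρ x x = ρ.trace from rfl]
  field_simp

/-- The second moment of the single-snapshot classical-shadow estimator of a `k`-local Pauli
observable: for `O` a Pauli string acting as `X`, `Y`, or `Z` on a set `K` of `k` qubits and as
`I₂` elsewhere,
`(1/3^N) · Σ_P Σ_b w_ρ(P,b) · (Tr(S(P,b)·(⊗_j O_j)))² = 3^k · Tr(ρ)`;
for a trace-one state `ρ` this equals exactly `3^k`, the squared shadow norm of a `k`-local
Pauli observable under random Pauli measurements. -/
theorem shadow_second_moment_local_pauli {N : ℕ} (hN : 1 ≤ N)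
    (K : Finset (Fin N)) (k : ℕ) (hk : K.card = k)
    (O : Fin N → Matrix (Fin 2) (Fin 2) ℂ)
    (hO : ∀ j ∈ K, O j = pauli 0 ∨ O j = pauli 1 ∨ O j = pauli 2)
    (hO' : ∀ j ∉ K, O j = 1)
    (ρ : Matrix (Fin N → Fin 2) (Fin N → Fin 2) ℂ) :
    (1 / 3 ^ N : ℂ) * ∑ P : Fin N → Fin 3, ∑ b : Fin N → Fin 2,
      wgt ρ P b * (Matrix.trace (snapshot P b * tensorProd O)) ^ 2
      = 3 ^ k * Matrix.trace ρ :=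
  shadow_second_moment_local_pauli_general K k hk O hO hO' ρ
end
end
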